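/- Along the constraint curve τ ↦ (τ t, τ^p), the Legendre transform Ψ_p* satisfies d/dτ Ψ_p*(τ t, τ^p) = τ^{p-1} - 1/τ at every τ > 0 where Ψ_p*(τt, τ^p) is finite and the supremum defining it is attained at an interior point. Consequently the map τ ↦ Ψ_p*(τt, τ^p) is minimized at τ = 1. -/

import Mathlib

/-!
Substituting `y = c z` in the integral defining `Λ_p` gives the scaling symmetry
`Λ_p(c t₁, c^p t₂ - (c^p - 1)/p) = Λ_p(t₁, t₂) - log c`, which averages to the same identity for
`Ψ_p`; differentiating at `c = 1` gives `s₁ ∂₁Ψ_p + (p s₂ - 1) ∂₂Ψ_p = -1` wherever `s₂ < 1/p`.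
By the envelope theorem, `d/dτ Ψ_p*(τt, τ^p) = s₁ t + p s₂ τ^{p-1}`, and the first order conditions
turn the identity into `τ · d/dτ Ψ_p*(τt, τ^p) = τ^p - 1`. The averaging over `u` is legitimate
because `Λ_p(0, t₂) ≤ Λ_p(t₁, t₂) ≤ A + B |t₁|^{p/(p-1)}`, by symmetry and Young's inequality.
-/

open Real MeasureTheory

/-- The generalized `p`-th Gaussian density. -/
noncomputable def fp (p : ℝ) (y : ℝ) : ℝ :=
  Real.exp (-|y| ^ p / p) / (2 * p ^ (1/p) * Real.Gamma (1 + 1/p))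

/-- The standard Gaussian density. -/
noncomputable def gauss (u : ℝ) : ℝ := Real.exp (-u ^ 2 / 2) / Real.sqrt (2 * Real.pi)

/-- The log moment generating function of `(Y, |Y|^p)` for `Y` generalized `p`-Gaussian. -/
noncomputable def Lambda (p t₁ t₂ : ℝ) : ℝ :=
  Real.log (∫ y : ℝ, Real.exp (t₁ * y + t₂ * |y| ^ p) * fp p y)

open Set Filter

lemma integrable_comp_abs_of_integrableOn_Ioi {f : ℝ → ℝ} (hf : IntegrableOn f (Ioi 0)) :
    Integrable fun x => f |x| := by
  have hIoi : IntegrableOn (fun x => f |x|) (Ioi 0) :=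
    hf.congr_fun (fun x hx => by rw [abs_of_pos hx]) measurableSet_Ioi
  rw [← integrableOn_univ, ← Iic_union_Ioi (a := (0 : ℝ)), integrableOn_union]
  refine ⟨?_, hIoi⟩
  rw [← (Measure.measurePreserving_neg (volume : Measure ℝ)).integrableOn_comp_preimage
      (Homeomorph.neg ℝ).measurableEmbedding]
  simpa only [Function.comp_def, abs_neg, neg_preimage, neg_Iic, neg_zero]
    using (integrableOn_Ici_iff_integrableOn_Ioi (f := fun x => f |x|)).mpr hIoi

lemma integrable_exp_neg_mul_abs_rpow {p b : ℝ} (hp : 0 < p) (hb : 0 < b) :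
    Integrable fun y : ℝ => exp (-b * |y| ^ p) :=
  integrable_comp_abs_of_integrableOn_Ioi (f := fun x => exp (-b * x ^ p)) <| by
    simpa using integrableOn_rpow_mul_exp_neg_mul_rpow (s := 0) (by norm_num) hp hb

lemma integrable_abs_rpow_mul_gauss {q : ℝ} (hq : -1 < q) :
    Integrable fun u : ℝ => |u| ^ q * gauss u := by
  refine (integrable_comp_abs_of_integrableOn_Ioi
    ((integrableOn_rpow_mul_exp_neg_mul_sq (b := 1 / 2) (by norm_num) hq).div_const
      √(2 * π))).congr (ae_of_all _ fun u => ?_)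
  simp only [gauss, sq_abs, mul_div_assoc]
  ring_nf

lemma integrable_gauss : Integrable gauss := by
  simpa using integrable_abs_rpow_mul_gauss (q := 0) (by norm_num)

lemma integral_gauss : ∫ u, gauss u = 1 := by
  have h := integral_gaussian (1 / 2)
  simp only [gauss, div_eq_mul_inv, integral_mul_const]
  field_simp at h ⊢
  exact h

lemma gauss_nonneg (u : ℝ) : 0 ≤ gauss u := by
  unfold gauss
  positivity

section TiltedDensity

variable {p : ℝ}

lemma fp_pos (hp : 0 < p) (y : ℝ) : 0 < fp p y := by
  unfold fp
  positivity

noncomputable def tiltedDensity (p t₁ t₂ y : ℝ) : ℝ := exp (t₁ * y + t₂ * |y| ^ p) * fp p y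

lemma Lambda_eq_log_integral (t₁ t₂ : ℝ) :
    Lambda p t₁ t₂ = log (∫ y, tiltedDensity p t₁ t₂ y) := rfl

lemma tiltedDensity_pos (hp : 0 < p) (t₁ t₂ y : ℝ) : 0 < tiltedDensity p t₁ t₂ y :=
  mul_pos (exp_pos _) (fp_pos hp y)

lemma continuous_tiltedDensity (hp : 0 < p) (t₂ : ℝ) :
    Continuous fun x : ℝ × ℝ => tiltedDensity p x.1 t₂ x.2 := by
  unfold tiltedDensity fp
  fun_prop (disch := exact hp.le)

lemma integrable_tiltedDensity_zero (hp : 0 < p) {t₂ : ℝ} (ht₂ : t₂ < 1 / p) :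
    Integrable (tiltedDensity p 0 t₂) := by
  refine ((integrable_exp_neg_mul_abs_rpow hp (sub_pos.2 ht₂)).div_const
    (2 * p ^ (1 / p) * Gamma (1 + 1 / p))).congr (ae_of_all _ fun y => ?_)
  simp only [tiltedDensity, fp, zero_mul, zero_add, mul_div_assoc', ← exp_add]
  ring_nf

lemma exists_mul_le_mul_abs_rpow_add_mul_abs_rpow {p q η : ℝ} (hpq : p.HolderConjugate q)
    (hη : 0 < η) : ∃ C, ∀ t y : ℝ, t * y ≤ η * |y| ^ p + C * |t| ^ q := by
  set δ := (p * η) ^ (1 / p)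
  have hδ : 0 < δ := rpow_pos_of_pos (mul_pos hpq.pos hη) _
  have hδp : δ ^ p = p * η := by
    rw [← rpow_mul (mul_pos hpq.pos hη).le, one_div_mul_cancel hpq.ne_zero, rpow_one]
  refine ⟨(δ ^ q)⁻¹ / q, fun t y => ?_⟩
  -- Young's inequality for the factorization `|t y| = (δ |y|) (|t| / δ)`
  have hyoung := young_inequality_of_nonneg (mul_nonneg hδ.le (abs_nonneg y))
    (div_nonneg (abs_nonneg t) hδ.le) hpq
  rw [mul_rpow hδ.le (abs_nonneg y), hδp, div_rpow (abs_nonneg t) hδ.le] at hyoung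
  calc t * y ≤ |t * y| := le_abs_self _
    _ = δ * |y| * (|t| / δ) := by rw [abs_mul]; field_simp
    _ ≤ _ := hyoung
    _ = η * |y| ^ p + (δ ^ q)⁻¹ / q * |t| ^ q := by field_simp [hpq.ne_zero]

lemma exists_tiltedDensity_le {q : ℝ} (hpq : p.HolderConjugate q) {t₂ t₂' : ℝ} (h : t₂ < t₂') :
    ∃ C, ∀ t₁ y, tiltedDensity p t₁ t₂ y ≤ exp (C * |t₁| ^ q) * tiltedDensity p 0 t₂' y := by
  obtain ⟨C, hC⟩ := exists_mul_le_mul_abs_rpow_add_mul_abs_rpow hpq (sub_pos.2 h)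
  refine ⟨C, fun t₁ y => ?_⟩
  rw [tiltedDensity, tiltedDensity, ← mul_assoc, ← exp_add]
  refine mul_le_mul_of_nonneg_right (exp_le_exp.2 ?_) (fp_pos hpq.pos y).le
  linarith [hC t₁ y]

lemma integrable_tiltedDensity (hp : 1 < p) {t₂ : ℝ} (ht₂ : t₂ < 1 / p) (t₁ : ℝ) :
    Integrable (tiltedDensity p t₁ t₂) := by
  obtain ⟨C, hC⟩ := exists_tiltedDensity_le (.conjExponent hp) (left_lt_add_div_two.2 ht₂)
  refine ((integrable_tiltedDensity_zero (by linarith) (add_div_two_lt_right.2 ht₂)).const_mul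
    (exp (C * |t₁| ^ p.conjExponent))).mono' ((continuous_tiltedDensity (by linarith) t₂).comp
      (.prodMk continuous_const continuous_id)).aestronglyMeasurable (ae_of_all _ fun y => ?_)
  rw [norm_of_nonneg (tiltedDensity_pos (by linarith) t₁ t₂ y).le]
  exact hC t₁ y

lemma integral_tiltedDensity_pos (hp : 1 < p) {t₂ : ℝ} (ht₂ : t₂ < 1 / p) (t₁ : ℝ) :
    0 < ∫ y, tiltedDensity p t₁ t₂ y := by
  have hpos := tiltedDensity_pos (zero_lt_one.trans hp) t₁ t₂
  rw [integral_pos_iff_support_of_nonneg (fun y => (hpos y).le)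
    (integrable_tiltedDensity hp ht₂ t₁), Function.support_eq_univ fun y => (hpos y).ne']
  simp

end TiltedDensity

section LambdaBounds

variable {p : ℝ}

lemma Lambda_le (hp : 1 < p) {t₂ : ℝ} (ht₂ : t₂ < 1 / p) :
    ∃ A C, ∀ t₁, Lambda p t₁ t₂ ≤ A + C * |t₁| ^ p.conjExponent := by
  set t₂' := (t₂ + 1 / p) / 2
  have ht₂' : t₂' < 1 / p := add_div_two_lt_right.2 ht₂
  obtain ⟨C, hC⟩ := exists_tiltedDensity_le (.conjExponent hp) (left_lt_add_div_two.2 ht₂)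
  refine ⟨Lambda p 0 t₂', C, fun t₁ => ?_⟩
  calc Lambda p t₁ t₂
      ≤ log (exp (C * |t₁| ^ p.conjExponent) * ∫ y, tiltedDensity p 0 t₂' y) := by
        rw [← integral_const_mul]
        exact log_le_log (integral_tiltedDensity_pos hp ht₂ t₁)
          (integral_mono (integrable_tiltedDensity hp ht₂ t₁)
            ((integrable_tiltedDensity hp ht₂' 0).const_mul _) (hC t₁))
    _ = Lambda p 0 t₂' + C * |t₁| ^ p.conjExponent := by
        rw [log_mul (exp_pos _).ne' (integral_tiltedDensity_pos hp ht₂' 0).ne', log_exp, add_comm,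
          Lambda_eq_log_integral]

lemma Lambda_zero_le (hp : 1 < p) {t₂ : ℝ} (ht₂ : t₂ < 1 / p) (t₁ : ℝ) :
    Lambda p 0 t₂ ≤ Lambda p t₁ t₂ := by
  have hint := integrable_tiltedDensity hp ht₂
  -- `y ↦ -y` preserves the density, and `exp (t₁ y) + exp (-t₁ y) ≥ 2`.
  have hsymm : ∫ y, tiltedDensity p (-t₁) t₂ y = ∫ y, tiltedDensity p t₁ t₂ y := by
    rw [← integral_neg_eq_self]
    simp [tiltedDensity, fp]
  have hcosh (y : ℝ) :
      2 * tiltedDensity p 0 t₂ y ≤ tiltedDensity p t₁ t₂ y + tiltedDensity p (-t₁) t₂ y := by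
    have htilt (s : ℝ) : tiltedDensity p s t₂ y = exp (s * y) * tiltedDensity p 0 t₂ y := by
      simp [tiltedDensity, exp_add, mul_assoc]
    rw [htilt t₁, htilt (-t₁), ← add_mul]
    refine mul_le_mul_of_nonneg_right ?_ (tiltedDensity_pos (zero_lt_one.trans hp) 0 t₂ y).le
    linarith [add_one_le_exp (t₁ * y), add_one_le_exp (-t₁ * y)]
  have h := integral_mono ((hint 0).const_mul 2) ((hint t₁).add (hint (-t₁))) hcosh
  simp only [Pi.add_apply] at h
  rw [integral_const_mul, integral_add (hint t₁) (hint (-t₁)), hsymm] at h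
  rw [Lambda_eq_log_integral, Lambda_eq_log_integral]
  exact log_le_log (integral_tiltedDensity_pos hp ht₂ 0) (by linarith)

lemma exists_abs_Lambda_le (hp : 1 < p) {t₂ : ℝ} (ht₂ : t₂ < 1 / p) :
    ∃ A B, ∀ t₁, |Lambda p t₁ t₂| ≤ A + B * |t₁| ^ p.conjExponent := by
  obtain ⟨A, C, hC⟩ := Lambda_le hp ht₂
  refine ⟨|A| + |Lambda p 0 t₂|, |C|, fun t₁ => ?_⟩
  have hq := rpow_nonneg (abs_nonneg t₁) p.conjExponent
  refine abs_le.2 ⟨?_, ?_⟩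
  · nlinarith [Lambda_zero_le hp ht₂ t₁, neg_abs_le (Lambda p 0 t₂), abs_nonneg A, abs_nonneg C]
  · nlinarith [hC t₁, le_abs_self A, le_abs_self C, abs_nonneg (Lambda p 0 t₂)]

lemma measurable_Lambda_mul_left (hp : 0 < p) (a t₂ : ℝ) :
    Measurable fun u => Lambda p (u * a) t₂ :=
  measurable_log.comp (StronglyMeasurable.integral_prod_right'
    ((continuous_tiltedDensity hp t₂).comp
      ((continuous_fst.mul continuous_const).prodMk continuous_snd)).stronglyMeasurable).measurable

lemma integrable_Lambda_mul_gauss (hp : 1 < p) {t₂ : ℝ} (ht₂ : t₂ < 1 / p) (a : ℝ) :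
    Integrable fun u => Lambda p (u * a) t₂ * gauss u := by
  obtain ⟨A, B, hAB⟩ := exists_abs_Lambda_le hp ht₂
  have hq : 0 < p.conjExponent := (Real.HolderConjugate.conjExponent hp).symm.pos
  refine ((integrable_gauss.const_mul A).add
    ((integrable_abs_rpow_mul_gauss (by linarith : -1 < p.conjExponent)).const_mul
      (B * |a| ^ p.conjExponent))).mono'
    ((measurable_Lambda_mul_left (by linarith) a t₂).aestronglyMeasurable.mul
      integrable_gauss.aestronglyMeasurable) (ae_of_all _ fun u => ?_)
  rw [norm_mul, norm_of_nonneg (gauss_nonneg u), norm_eq_abs]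
  calc |Lambda p (u * a) t₂| * gauss u
      ≤ (A + B * |u * a| ^ p.conjExponent) * gauss u :=
        mul_le_mul_of_nonneg_right (hAB _) (gauss_nonneg u)
    _ = _ := by
        rw [abs_mul, mul_rpow (abs_nonneg _) (abs_nonneg _), Pi.add_apply]
        ring

end LambdaBounds

section Scaling

variable {p : ℝ}

lemma tiltedDensity_scaling (hp : p ≠ 0) {c : ℝ} (hc : 0 < c) (t₁ t₂ z : ℝ) :
    tiltedDensity p (c * t₁) (c ^ p * t₂ - (c ^ p - 1) / p) z = tiltedDensity p t₁ t₂ (c * z) := by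
  have hcz : |c * z| ^ p = c ^ p * |z| ^ p := by
    rw [abs_mul, abs_of_pos hc, mul_rpow hc.le (abs_nonneg z)]
  simp only [tiltedDensity, fp, hcz, mul_div_assoc', ← exp_add]
  congr 2
  field_simp
  ring

lemma Lambda_scaling (hp : 1 < p) {t₂ : ℝ} (ht₂ : t₂ < 1 / p) (t₁ : ℝ) {c : ℝ} (hc : 0 < c) :
    Lambda p (c * t₁) (c ^ p * t₂ - (c ^ p - 1) / p) = Lambda p t₁ t₂ - log c := by
  simp only [Lambda_eq_log_integral, tiltedDensity_scaling (by linarith : p ≠ 0) hc,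
    Measure.integral_comp_mul_left (tiltedDensity p t₁ t₂), abs_of_pos (inv_pos.2 hc), smul_eq_mul]
  rw [log_mul (inv_ne_zero hc.ne') (integral_tiltedDensity_pos hp ht₂ t₁).ne', log_inv]
  ring

noncomputable def Psi (p : ℝ) (s : ℝ × ℝ) : ℝ := ∫ u, Lambda p (u * s.1) s.2 * gauss u

lemma Psi_scaling (hp : 1 < p) {a b : ℝ} (hb : b < 1 / p) {c : ℝ} (hc : 0 < c) :
    Psi p (c * a, c ^ p * b - (c ^ p - 1) / p) = Psi p (a, b) - log c := by
  have h (u : ℝ) : Lambda p (u * (c * a)) (c ^ p * b - (c ^ p - 1) / p) * gauss u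
      = Lambda p (u * a) b * gauss u - log c * gauss u := by
    rw [mul_left_comm, Lambda_scaling hp hb _ hc, sub_mul]
  simp only [Psi]
  rw [integral_congr_ae (ae_of_all _ h), integral_sub (integrable_Lambda_mul_gauss hp hb a)
    (integrable_gauss.const_mul _), integral_const_mul, integral_gauss, mul_one]

lemma fderiv_Psi_apply_scaling_direction (hp : 1 < p) {a b : ℝ} (hb : b < 1 / p)
    (hΨ : DifferentiableAt ℝ (Psi p) (a, b)) :
    fderiv ℝ (Psi p) (a, b) (a, p * b - 1) = -1 := by
  set γ : ℝ → ℝ × ℝ := fun c => (c * a, c ^ p * b - (c ^ p - 1) / p)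
  have hγ₁ : γ 1 = (a, b) := by simp [γ]
  have hpow : HasDerivAt (fun c : ℝ => c ^ p) p 1 := by
    simpa using hasDerivAt_rpow_const (x := 1) (p := p) (Or.inl one_ne_zero)
  have hγ : HasDerivAt γ (a, p * b - 1) 1 := by
    refine (((hasDerivAt_id 1).mul_const a).congr_deriv (one_mul a)).prodMk
      (((hpow.mul_const b).sub ((hpow.sub_const 1).div_const p)).congr_deriv ?_)
    rw [div_self (by linarith), mul_comm]
  have hcomp : HasDerivAt (Psi p ∘ γ) (fderiv ℝ (Psi p) (γ 1) (a, p * b - 1)) 1 :=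
    (hγ₁ ▸ hΨ).hasFDerivAt.comp_hasDerivAt 1 hγ
  have hlog : HasDerivAt (Psi p ∘ γ) (-1) 1 := by
    have h : HasDerivAt (fun c => Psi p (a, b) - log c) (-1) 1 := by
      simpa using (hasDerivAt_log one_ne_zero).const_sub (Psi p (a, b))
    exact h.congr_of_eventuallyEq <| by
      filter_upwards [eventually_gt_nhds one_pos] with c hc using Psi_scaling hp hb hc
  rw [← hγ₁]
  exact hcomp.unique hlog

end Scaling

lemma ContinuousLinearMap.map_pair {F : Type*} [NormedAddCommGroup F] [NormedSpace ℝ F]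
    (L : ℝ × ℝ →L[ℝ] F) (a b : ℝ) : L (a, b) = a • L (1, 0) + b • L (0, 1) := by
  rw [← L.map_smul, ← L.map_smul, ← map_add]
  simp

lemma hasDerivAt_envelope {Ψ : ℝ × ℝ → ℝ} {s₁ s₂ x₁ x₂ : ℝ → ℝ} {s₁' s₂' x₁' x₂' τ : ℝ}
    (hs₁ : HasDerivAt s₁ s₁' τ) (hs₂ : HasDerivAt s₂ s₂' τ)
    (hx₁ : HasDerivAt x₁ x₁' τ) (hx₂ : HasDerivAt x₂ x₂' τ)
    (hΨ : DifferentiableAt ℝ Ψ (s₁ τ, s₂ τ))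
    (h₁ : fderiv ℝ Ψ (s₁ τ, s₂ τ) (1, 0) = x₁ τ) (h₂ : fderiv ℝ Ψ (s₁ τ, s₂ τ) (0, 1) = x₂ τ) :
    HasDerivAt (fun σ => s₁ σ * x₁ σ + s₂ σ * x₂ σ - Ψ (s₁ σ, s₂ σ))
      (s₁ τ * x₁' + s₂ τ * x₂') τ := by
  have hΨs := hΨ.hasFDerivAt.comp_hasDerivAt τ (hs₁.prodMk hs₂)
  rw [ContinuousLinearMap.map_pair, h₁, h₂, smul_eq_mul, smul_eq_mul] at hΨs
  exact (((hs₁.mul hx₁).add (hs₂.mul hx₂)).sub hΨs).congr_deriv (by ring)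

lemma isMinOn_Ioi_of_hasDerivAt_rpow_sub_inv {g : ℝ → ℝ} {p : ℝ} (hp : 1 ≤ p)
    (hg : ∀ τ, 0 < τ → HasDerivAt g (τ ^ (p - 1) - 1 / τ) τ) : IsMinOn g (Ioi 0) 1 := by
  have hdiff (a : ℝ) (ha : 0 ≤ a) {s : Set ℝ} (hs : s ⊆ Ioi a) : DifferentiableOn ℝ g s :=
    fun τ hτ => (hg τ (ha.trans_lt (hs hτ))).differentiableAt.differentiableWithinAt
  refine isMinOn_Ioi_of_deriv (hg 1 one_pos).continuousAt (hdiff 0 le_rfl Ioo_subset_Ioi_self)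
    (hdiff 1 zero_le_one subset_rfl) (fun τ hτ => ?_) (fun τ hτ => ?_)
  · rw [(hg τ hτ.1).deriv, sub_nonpos]
    exact (rpow_le_one hτ.1.le hτ.2.le (by linarith)).trans ((one_le_div hτ.1).2 hτ.2.le)
  · have hτ₀ : (0 : ℝ) < τ := one_pos.trans hτ
    rw [(hg τ hτ₀).deriv, sub_nonneg]
    exact ((div_le_one hτ₀).2 hτ.le).trans (one_le_rpow hτ.le (by linarith))

theorem stmt10 (p t : ℝ) (hp : 1 < p)
    (Ψ : ℝ × ℝ → ℝ)
    (hΨ : Ψ = fun s => ∫ u : ℝ, Lambda p (u * s.1) s.2 * gauss u)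
    (s₁ s₂ s₁' s₂' : ℝ → ℝ)
    (hdom : ∀ τ, 0 < τ → s₂ τ < 1/p)
    (hs₁ : ∀ τ, 0 < τ → HasDerivAt s₁ (s₁' τ) τ)
    (hs₂ : ∀ τ, 0 < τ → HasDerivAt s₂ (s₂' τ) τ)
    (hdiff : ∀ τ, 0 < τ → DifferentiableAt ℝ Ψ (s₁ τ, s₂ τ))
    -- first order conditions: ∇Ψ_p(s₁(τ), s₂(τ)) = (τ t, τ^p)
    (hfoc1 : ∀ τ, 0 < τ → fderiv ℝ Ψ (s₁ τ, s₂ τ) (1, 0) = τ * t)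
    (hfoc2 : ∀ τ, 0 < τ → fderiv ℝ Ψ (s₁ τ, s₂ τ) (0, 1) = τ ^ p)
    -- g τ = Ψ_p*(τ t, τ^p), the supremum being attained at (s₁(τ), s₂(τ))
    (g : ℝ → ℝ)
    (hg : g = fun τ => s₁ τ * (τ * t) + s₂ τ * τ ^ p - Ψ (s₁ τ, s₂ τ)) :
    (∀ τ : ℝ, 0 < τ → HasDerivAt g (τ ^ (p - 1) - 1 / τ) τ) ∧
    (∀ τ : ℝ, 0 < τ → g 1 ≤ g τ) := by
  obtain rfl : Ψ = Psi p := hΨ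
  have hderiv (τ : ℝ) (hτ : 0 < τ) : HasDerivAt g (τ ^ (p - 1) - 1 / τ) τ := by
    have henv := hasDerivAt_envelope (hs₁ τ hτ) (hs₂ τ hτ) ((hasDerivAt_id τ).mul_const t)
      (hasDerivAt_rpow_const (p := p) (Or.inl hτ.ne')) (hdiff τ hτ) (hfoc1 τ hτ) (hfoc2 τ hτ)
    have hscal := fderiv_Psi_apply_scaling_direction hp (hdom τ hτ) (hdiff τ hτ)
    rw [ContinuousLinearMap.map_pair, hfoc1 τ hτ, hfoc2 τ hτ, smul_eq_mul, smul_eq_mul] at hscal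
    have hτp : τ ^ p = τ ^ (p - 1) * τ := by rw [← rpow_add_one hτ.ne', sub_add_cancel]
    rw [hg]
    refine henv.congr_deriv ?_
    rw [hτp] at hscal
    field_simp
    linear_combination hscal
  exact ⟨hderiv, fun τ hτ => isMinOn_Ioi_of_hasDerivAt_rpow_sub_inv hp.le hderiv hτ⟩
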